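/- arXiv:2207.12921 — 7 statements merged into one kernel-verified Lean document; each statement's English description precedes it below -/
import Mathlib

section
/- In UT₃ with the almost-canonical ℤ₂-grading (where the even component is spanned by e₁₁, e₂₂, e₃₃, e₁₃ and the odd component by e₁₂, e₂₃), for any three odd elements z₁, z₂, z₃ one has [[z₁,z₂],z₃] = 0. -/
/-!
The odd component consists of strictly upper triangular matrices. Filter `3 × 3` matrices by
the diagonals on which they may be nonzero: matrix products, hence commutators, add the
filtration degrees, and every `3 × 3` matrix of degree `3` is zero. So the double commutator of
three odd elements, of degree `1 + 1 + 1`, vanishes.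
-/

open Matrix

namespace Matrix

variable (R : Type*) [Semiring R] (n : ℕ)

def upperBand (k : ℕ) : Submodule R (Matrix (Fin n) (Fin n) R) where
  carrier := {A | ∀ i j : Fin n, (j : ℕ) < i + k → A i j = 0}
  add_mem' {A B} hA hB i j h := by simp [hA i j h, hB i j h]
  zero_mem' _ _ _ := rfl
  smul_mem' c A hA i j h := by simp [hA i j h]

variable {R n}

theorem single_mem_upperBand {k : ℕ} {i j : Fin n} (h : (i : ℕ) + k ≤ j) (c : R) :
    single i j c ∈ upperBand R n k := by
  intro a b hab
  rw [single_apply_of_ne]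
  rintro ⟨rfl, rfl⟩
  omega

theorem mul_mem_upperBand {k l : ℕ} {A B : Matrix (Fin n) (Fin n) R}
    (hA : A ∈ upperBand R n k) (hB : B ∈ upperBand R n l) : A * B ∈ upperBand R n (k + l) := by
  intro i j hij
  rw [mul_apply]
  refine Finset.sum_eq_zero fun m _ => ?_
  by_cases hm : (m : ℕ) < i + k
  · rw [hA i m hm, zero_mul]
  · rw [hB m j (by omega), mul_zero]

theorem upperBand_eq_bot_of_le {k : ℕ} (h : n ≤ k) : upperBand R n k = ⊥ :=
  eq_bot_iff.2 fun A hA => (Submodule.mem_bot R).2 <| ext fun i j => hA i j (by omega)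

theorem lie_mem_upperBand {R : Type*} [Ring R] {k l : ℕ} {A B : Matrix (Fin n) (Fin n) R}
    (hA : A ∈ upperBand R n k) (hB : B ∈ upperBand R n l) : ⁅A, B⁆ ∈ upperBand R n (k + l) := by
  rw [Ring.lie_def]
  exact sub_mem (mul_mem_upperBand hA hB) (add_comm l k ▸ mul_mem_upperBand hB hA)

end Matrix

theorem ut3_almost_canonical_odd_cubed
    {F : Type*} [Field F]
    (lie : Matrix (Fin 3) (Fin 3) F → Matrix (Fin 3) (Fin 3) F → Matrix (Fin 3) (Fin 3) F)
    (hlie : ∀ x y, lie x y = x * y - y * x)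
    (z₁ z₂ z₃ : Matrix (Fin 3) (Fin 3) F)
    (h₁ : z₁ ∈ Submodule.span F ({Matrix.single 0 1 (1 : F), Matrix.single 1 2 (1 : F)} :
      Set (Matrix (Fin 3) (Fin 3) F)))
    (h₂ : z₂ ∈ Submodule.span F ({Matrix.single 0 1 (1 : F), Matrix.single 1 2 (1 : F)} :
      Set (Matrix (Fin 3) (Fin 3) F)))
    (h₃ : z₃ ∈ Submodule.span F ({Matrix.single 0 1 (1 : F), Matrix.single 1 2 (1 : F)} :
      Set (Matrix (Fin 3) (Fin 3) F))) :
    lie (lie z₁ z₂) z₃ = 0 := by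
  have hodd : Submodule.span F ({single 0 1 (1 : F), single 1 2 (1 : F)} :
      Set (Matrix (Fin 3) (Fin 3) F)) ≤ upperBand F 3 1 := by
    rw [Submodule.span_le]
    rintro _ (rfl | rfl) <;> exact single_mem_upperBand (by decide) 1
  have hdeg3 : lie (lie z₁ z₂) z₃ ∈ upperBand F 3 (1 + 1 + 1) := by
    simp only [hlie, ← Ring.lie_def]
    exact lie_mem_upperBand (lie_mem_upperBand (hodd h₁) (hodd h₂)) (hodd h₃)
  rwa [upperBand_eq_bot_of_le le_rfl, Submodule.mem_bot] at hdeg3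
end

section
/- In UT₃ with the almost-canonical ℤ₂-grading, for any even elements y₁, y₂ and odd element z, [[y₁,y₂],z] = 0. -/
/-! The even part is the diagonal plus `F e₁₃`, and diagonal matrices commute, so the bracket of
two even elements is a multiple of `e₁₃`. The odd elements have zero first column and zero last
row, so `e₁₃` annihilates them from both sides. (Indices are `0`-based: `e₁₃` is `single 0 2 1`.) -/

open Matrix

namespace Matrix

variable {l m n R : Type*}

theorem apply_eq_zero_of_mem_span [Semiring R] {S : Set (Matrix m n R)} {i : m} {j : n}
    (hS : ∀ M ∈ S, M i j = 0) {x : Matrix m n R} (hx : x ∈ Submodule.span R S) : x i j = 0 :=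
  Submodule.span_le (p := LinearMap.ker (entryLinearMap R R i j)) |>.mpr hS hx

variable [Fintype m] [DecidableEq m] [NonUnitalNonAssocSemiring R]

theorem single_mul_eq_zero [DecidableEq l] {M : Matrix m n R} {j : m} (hM : ∀ k, M j k = 0)
    (i : l) (c : R) : single i j c * M = 0 := by
  ext a b
  by_cases ha : a = i
  · simp [ha, hM]
  · simp [ha]

theorem mul_single_eq_zero [DecidableEq n] {M : Matrix l m R} {i : m} (hM : ∀ k, M k i = 0)
    (j : n) (c : R) : M * single i j c = 0 := by
  ext a b
  by_cases hb : b = j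
  · simp [hb, hM]
  · simp [hb]

end Matrix

section

variable (F : Type*) [Field F]

abbrev ut3Even : Submodule F (Matrix (Fin 3) (Fin 3) F) :=
  Submodule.span F {single 0 0 1, single 1 1 1, single 2 2 1, single 0 2 1}

abbrev ut3Odd : Submodule F (Matrix (Fin 3) (Fin 3) F) :=
  Submodule.span F {single 0 1 1, single 1 2 1}

variable {F}

theorem apply_eq_zero_of_mem_ut3Even {y : Matrix (Fin 3) (Fin 3) F} (hy : y ∈ ut3Even F) :
    y 0 1 = 0 ∧ y 1 0 = 0 ∧ y 1 2 = 0 ∧ y 2 0 = 0 ∧ y 2 1 = 0 := by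
  refine ⟨?_, ?_, ?_, ?_, ?_⟩ <;> exact apply_eq_zero_of_mem_span (by simp) hy

theorem apply_eq_zero_of_mem_ut3Odd {z : Matrix (Fin 3) (Fin 3) F} (hz : z ∈ ut3Odd F) :
    (∀ k, z 2 k = 0) ∧ ∀ k, z k 0 = 0 :=
  ⟨fun _ ↦ apply_eq_zero_of_mem_span (by simp) hz, fun _ ↦ apply_eq_zero_of_mem_span (by simp) hz⟩

theorem commutator_of_mem_ut3Even {y₁ y₂ : Matrix (Fin 3) (Fin 3) F}
    (h₁ : y₁ ∈ ut3Even F) (h₂ : y₂ ∈ ut3Even F) :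
    y₁ * y₂ - y₂ * y₁ =
      single 0 2 ((y₁ 0 0 - y₁ 2 2) * y₂ 0 2 - (y₂ 0 0 - y₂ 2 2) * y₁ 0 2) := by
  obtain ⟨a₀₁, a₁₀, a₁₂, a₂₀, a₂₁⟩ := apply_eq_zero_of_mem_ut3Even h₁
  obtain ⟨b₀₁, b₁₀, b₁₂, b₂₀, b₂₁⟩ := apply_eq_zero_of_mem_ut3Even h₂
  ext i j
  fin_cases i <;> fin_cases j <;>
    simp [mul_apply, Fin.sum_univ_three, a₀₁, a₁₀, a₁₂, a₂₀, a₂₁, b₀₁, b₁₀, b₁₂, b₂₀, b₂₁] <;>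
    ring

end

theorem ut3_almost_canonical_even_even_odd
    {F : Type*} [Field F]
    (lie : Matrix (Fin 3) (Fin 3) F → Matrix (Fin 3) (Fin 3) F → Matrix (Fin 3) (Fin 3) F)
    (hlie : ∀ x y, lie x y = x * y - y * x)
    (y₁ y₂ z : Matrix (Fin 3) (Fin 3) F)
    (h₁ : y₁ ∈ Submodule.span F ({Matrix.single 0 0 (1 : F), Matrix.single 1 1 (1 : F),
      Matrix.single 2 2 (1 : F), Matrix.single 0 2 (1 : F)} : Set (Matrix (Fin 3) (Fin 3) F)))
    (h₂ : y₂ ∈ Submodule.span F ({Matrix.single 0 0 (1 : F), Matrix.single 1 1 (1 : F),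
      Matrix.single 2 2 (1 : F), Matrix.single 0 2 (1 : F)} : Set (Matrix (Fin 3) (Fin 3) F)))
    (hz : z ∈ Submodule.span F ({Matrix.single 0 1 (1 : F), Matrix.single 1 2 (1 : F)} :
      Set (Matrix (Fin 3) (Fin 3) F))) :
    lie (lie y₁ y₂) z = 0 := by
  obtain ⟨hrow, hcol⟩ := apply_eq_zero_of_mem_ut3Odd hz
  rw [hlie, hlie, commutator_of_mem_ut3Even h₁ h₂, single_mul_eq_zero hrow,
    mul_single_eq_zero hcol, sub_zero]
end

section
/- In UT₃ graded by (g,1) with g nontrivial (the 'remaining' grading: deg e₁₂ = deg e₁₃ = g, all other matrix units trivial), for any element a of degree g and any elements y₂, y₃, y₄, y₅ of trivial degree, the left-normed bracket [a, [y₂,y₃], [y₄,y₅]] = 0. -/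
/-!
The commutator is bilinear, so inclusions of commutators of spans can be checked on the spanning
matrix units. Commutators of trivial-degree elements lie in `F e₂₃`; bracketing with a degree-`g`
element moves this into `F e₁₃`; and `e₁₃` commutes with `e₂₃`. In Lean the matrix units are
indexed from `0`, so `e₂₃` is `single 1 2 1`.
-/

open Matrix

theorem commutator_mem_of_mem_span {R A : Type*} [CommRing R] [Ring A] [Algebra R A]
    {s t : Set A} {p : Submodule R A} (h : ∀ a ∈ s, ∀ b ∈ t, a * b - b * a ∈ p)
    {x y : A} (hx : x ∈ Submodule.span R s) (hy : y ∈ Submodule.span R t) :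
    x * y - y * x ∈ p := by
  let c : A →ₗ[R] A →ₗ[R] A := LinearMap.mul R A - (LinearMap.mul R A).flip
  have hc : Submodule.map₂ c (Submodule.span R s) (Submodule.span R t) ≤ p := by
    rw [Submodule.map₂_span_span, Submodule.span_le]
    rintro _ ⟨a, ha, b, hb, rfl⟩
    exact h a ha b hb
  exact hc (Submodule.apply_mem_map₂ c hx hy)

section UT3

variable {R : Type*} [CommRing R] {x y : Matrix (Fin 3) (Fin 3) R}

theorem ut3_commutator_trivial_mem
    (hx : x ∈ Submodule.span R {single 0 0 1, single 1 1 1, single 2 2 1, single 1 2 1})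
    (hy : y ∈ Submodule.span R {single 0 0 1, single 1 1 1, single 2 2 1, single 1 2 1}) :
    x * y - y * x ∈ Submodule.span R {single (1 : Fin 3) (2 : Fin 3) (1 : R)} := by
  refine commutator_mem_of_mem_span ?_ hx hy
  simp [single_mul_single_same, single_mul_single_of_ne, Submodule.mem_span_singleton_self]

theorem ut3_commutator_degree_g_mem
    (hx : x ∈ Submodule.span R {single 0 1 1, single 0 2 1})
    (hy : y ∈ Submodule.span R {single 1 2 1}) :
    x * y - y * x ∈ Submodule.span R {single (0 : Fin 3) (2 : Fin 3) (1 : R)} := by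
  refine commutator_mem_of_mem_span ?_ hx hy
  simp [single_mul_single_same, single_mul_single_of_ne, Submodule.mem_span_singleton_self]

theorem ut3_commutator_eq_zero
    (hx : x ∈ Submodule.span R {single 0 2 1})
    (hy : y ∈ Submodule.span R {single 1 2 1}) :
    x * y - y * x = 0 := by
  rw [← Submodule.mem_bot R]
  refine commutator_mem_of_mem_span ?_ hx hy
  simp [single_mul_single_of_ne]

end UT3

theorem ut3_remaining_grading_identity
    {F : Type*} [Field F]
    (lie : Matrix (Fin 3) (Fin 3) F → Matrix (Fin 3) (Fin 3) F → Matrix (Fin 3) (Fin 3) F)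
    (hlie : ∀ x y, lie x y = x * y - y * x)
    (a y₂ y₃ y₄ y₅ : Matrix (Fin 3) (Fin 3) F)
    (ha : a ∈ Submodule.span F ({Matrix.single 0 1 (1 : F), Matrix.single 0 2 (1 : F)} :
      Set (Matrix (Fin 3) (Fin 3) F)))
    (hy : ∀ y ∈ ({y₂, y₃, y₄, y₅} : Set (Matrix (Fin 3) (Fin 3) F)),
      y ∈ Submodule.span F ({Matrix.single 0 0 (1 : F), Matrix.single 1 1 (1 : F),
        Matrix.single 2 2 (1 : F), Matrix.single 1 2 (1 : F)} : Set (Matrix (Fin 3) (Fin 3) F))) :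
    lie (lie a (lie y₂ y₃)) (lie y₄ y₅) = 0 := by
  simp only [hlie]
  have h₂₃ := ut3_commutator_trivial_mem (hy y₂ (by simp)) (hy y₃ (by simp))
  have h₄₅ := ut3_commutator_trivial_mem (hy y₄ (by simp)) (hy y₅ (by simp))
  exact ut3_commutator_eq_zero (ut3_commutator_degree_g_mem ha h₂₃) h₄₅
end

section
/- In UT₃ over a field of characteristic zero, with the Canonical T2 grading components A₁ = Span{e₁₂ - e₂₃} and A_{1+t} = Span{e₁₂ + e₂₃} and A₀ = Span{e₁₁ - e₃₃}, for all a ∈ A₁, b ∈ A₀, c ∈ A_{1+t}: 2·[[a,b],c] = [[a,c],b]. -/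
/-!
Put `h = e₁₁ - e₃₃`. Both `e₁₂ - e₂₃` and `e₁₂ + e₂₃` lie in the `1`-eigenspace of `ad h`, so for
`b = β h` the elements `a` and `c` are eigenvectors of `ad b` with the common eigenvalue `β`.
Then `[[a, b], c] = -β [a, c]`, while by the Leibniz rule `[a, c]` is an eigenvector of `ad b` with
eigenvalue `2β`, so `[[a, c], b] = -2β [a, c]`.
-/

open Matrix

section

variable {R L : Type*} [CommRing R] [LieRing L] [LieAlgebra R L]

theorem two_nsmul_lie_lie_eq_of_lie_eq_smul {h a c : L} {t : R}
    (ha : ⁅h, a⁆ = t • a) (hc : ⁅h, c⁆ = t • c) :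
    2 • ⁅⁅a, h⁆, c⁆ = ⁅⁅a, c⁆, h⁆ := by
  have hac : ⁅h, ⁅a, c⁆⁆ = 2 • t • ⁅a, c⁆ := by
    rw [leibniz_lie, ha, hc, smul_lie, lie_smul, two_nsmul]
  rw [← lie_skew a h, ha, ← lie_skew _ h, hac, neg_lie, smul_lie, smul_neg]

theorem lie_smul_eq_smul_of_mem_span_singleton {h x a : L} (hx : ⁅h, x⁆ = x)
    (ha : a ∈ Submodule.span R {x}) (β : R) : ⁅β • h, a⁆ = β • a := by
  obtain ⟨α, rfl⟩ := Submodule.mem_span_singleton.1 ha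
  rw [smul_lie, lie_smul, hx, smul_comm]

end

attribute [local instance] LieRing.ofAssociativeRing

local notation "M₃" => Matrix (Fin 3) (Fin 3)

section

variable {R : Type*} [Ring R]

theorem lie_single_zero_zero_sub_single_two_two_single_zero_one (r : R) :
    ⁅(single 0 0 1 - single 2 2 1 : M₃ R), (single 0 1 r : M₃ R)⁆ = single 0 1 r := by
  simp [Ring.lie_def, sub_mul, mul_sub, single_mul_single_same, single_mul_single_of_ne]

theorem lie_single_zero_zero_sub_single_two_two_single_one_two (r : R) :
    ⁅(single 0 0 1 - single 2 2 1 : M₃ R), (single 1 2 r : M₃ R)⁆ = single 1 2 r := by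
  simp [Ring.lie_def, sub_mul, mul_sub, single_mul_single_same, single_mul_single_of_ne]

end

theorem ut3_canonical_T2_nonmonomial_identity_general
    {F : Type*} [Field F]
    (lie : Matrix (Fin 3) (Fin 3) F → Matrix (Fin 3) (Fin 3) F → Matrix (Fin 3) (Fin 3) F)
    (hlie : ∀ x y, lie x y = x * y - y * x)
    (a b c : Matrix (Fin 3) (Fin 3) F)
    (ha : a ∈ Submodule.span F
      ({Matrix.single 0 1 (1 : F) - Matrix.single 1 2 (1 : F)} : Set (Matrix (Fin 3) (Fin 3) F)))
    (hb : b ∈ Submodule.span F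
      ({Matrix.single 0 0 (1 : F) - Matrix.single 2 2 (1 : F)} : Set (Matrix (Fin 3) (Fin 3) F)))
    (hc : c ∈ Submodule.span F
      ({Matrix.single 0 1 (1 : F) + Matrix.single 1 2 (1 : F)} : Set (Matrix (Fin 3) (Fin 3) F))) :
    2 • lie (lie a b) c = lie (lie a c) b := by
  obtain rfl : lie = (⁅·, ·⁆) := funext₂ fun x y => (hlie x y).trans (Ring.lie_def x y).symm
  obtain ⟨β, rfl⟩ := Submodule.mem_span_singleton.1 hb
  have hX : ⁅(single 0 0 1 - single 2 2 1 : M₃ F), (single 0 1 1 - single 1 2 1 : M₃ F)⁆ =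
      single 0 1 1 - single 1 2 1 := by
    rw [lie_sub, lie_single_zero_zero_sub_single_two_two_single_zero_one,
      lie_single_zero_zero_sub_single_two_two_single_one_two]
  have hY : ⁅(single 0 0 1 - single 2 2 1 : M₃ F), (single 0 1 1 + single 1 2 1 : M₃ F)⁆ =
      single 0 1 1 + single 1 2 1 := by
    rw [lie_add, lie_single_zero_zero_sub_single_two_two_single_zero_one,
      lie_single_zero_zero_sub_single_two_two_single_one_two]
  exact two_nsmul_lie_lie_eq_of_lie_eq_smul (lie_smul_eq_smul_of_mem_span_singleton hX ha β)
    (lie_smul_eq_smul_of_mem_span_singleton hY hc β)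

theorem ut3_canonical_T2_nonmonomial_identity
    {F : Type*} [Field F] [CharZero F]
    (lie : Matrix (Fin 3) (Fin 3) F → Matrix (Fin 3) (Fin 3) F → Matrix (Fin 3) (Fin 3) F)
    (hlie : ∀ x y, lie x y = x * y - y * x)
    (a b c : Matrix (Fin 3) (Fin 3) F)
    (ha : a ∈ Submodule.span F
      ({Matrix.single 0 1 (1 : F) - Matrix.single 1 2 (1 : F)} : Set (Matrix (Fin 3) (Fin 3) F)))
    (hb : b ∈ Submodule.span F
      ({Matrix.single 0 0 (1 : F) - Matrix.single 2 2 (1 : F)} : Set (Matrix (Fin 3) (Fin 3) F)))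
    (hc : c ∈ Submodule.span F
      ({Matrix.single 0 1 (1 : F) + Matrix.single 1 2 (1 : F)} : Set (Matrix (Fin 3) (Fin 3) F))) :
    2 • lie (lie a b) c = lie (lie a c) b :=
  ut3_canonical_T2_nonmonomial_identity_general lie hlie a b c ha hb hc
end

section
/- In UT₃ with the Trivial T2 ℤ₂-grading (A₀ = Span{e₁₁-e₃₃, e₁₂-e₂₃}, A_t = Span{e₁₁+e₃₃, e₂₂, e₁₂+e₂₃, e₁₃}), the alternating sum ∑_{σ∈S₃} sgn(σ)·[y, z_{σ(1)}, z_{σ(2)}, z_{σ(3)}] vanishes for every y ∈ A₀ and z₁, z₂, z₃ ∈ A_t, with left-normed brackets. -/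
/-!
Write `y = p (e₁₁ - e₃₃) + q (e₁₂ - e₂₃)` and `zᵢ = aᵢ (e₁₁ + e₃₃) + bᵢ e₂₂ + cᵢ (e₁₂ + e₂₃) + dᵢ e₁₃`,
and put `gᵢ = bᵢ - aᵢ`, `fᵢ = p cᵢ + q gᵢ`. A direct computation gives
`[y, z₁, z₂, z₃] = f₁ g₂ g₃ (e₁₂ + e₂₃) + 2 f₁ g₂ c₃ e₁₃`,
so the two coefficients of the alternating sum are the determinants with rows `f, g, g` and
`f, g, 2c`. All these rows lie in the span of the two vectors `c` and `g`, so both determinants vanish.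
-/

open Matrix

section Determinant

variable {R : Type*} [CommRing R]

theorem sum_perm_sign_smul_mul_smul_eq_det_smul {M : Type*} [AddCommGroup M] [Module R M]
    (u v w : Fin 3 → R) (x : M) :
    ∑ σ : Equiv.Perm (Fin 3), (Equiv.Perm.sign σ : ℤ) • ((u (σ 0) * v (σ 1) * w (σ 2)) • x) =
      (of ![u, v, w]).det • x := by
  rw [← det_transpose, det_apply', Finset.sum_smul]
  refine Finset.sum_congr rfl fun σ _ => ?_
  simp [Fin.prod_univ_three, mul_smul, Int.cast_smul_eq_zsmul]

theorem det_eq_zero_of_forall_row_eq_smul_add_smul (s t : Fin 3 → R)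
    (M : Matrix (Fin 3) (Fin 3) R) (hM : ∀ i, ∃ a b : R, M i = a • s + b • t) : M.det = 0 := by
  choose a b hab using hM
  have h : ∀ i j, M i j = a i * s j + b i * t j := fun i j => by simp [hab]
  simp only [det_fin_three, h]
  ring

end Determinant

namespace UT3

variable {R : Type*} [CommRing R]

def evenPart (R : Type*) [CommRing R] : Submodule R (Matrix (Fin 3) (Fin 3) R) :=
  Submodule.span R {single 0 0 1 - single 2 2 1, single 0 1 1 - single 1 2 1}

def oddPart (R : Type*) [CommRing R] : Submodule R (Matrix (Fin 3) (Fin 3) R) :=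
  Submodule.span R {single 0 0 1 + single 2 2 1, single 1 1 1, single 0 1 1 + single 1 2 1,
    single 0 2 1}

theorem exists_eq_of_mem_evenPart {y : Matrix (Fin 3) (Fin 3) R} (hy : y ∈ evenPart R) :
    ∃ p q : R, y = !![p, q, 0; 0, 0, -q; 0, 0, -p] := by
  obtain ⟨p, q, rfl⟩ := Submodule.mem_span_pair.mp hy
  refine ⟨p, q, ?_⟩
  ext i j
  fin_cases i <;> fin_cases j <;> simp [single]

theorem exists_eq_of_mem_oddPart {z : Matrix (Fin 3) (Fin 3) R} (hz : z ∈ oddPart R) :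
    ∃ a b c d : R, z = !![a, c, d; 0, b, c; 0, 0, a] := by
  simp only [oddPart, Submodule.mem_span_insert, Submodule.mem_span_singleton] at hz
  obtain ⟨a, -, ⟨b, -, ⟨c, -, ⟨d, rfl⟩, rfl⟩, rfl⟩, rfl⟩ := hz
  refine ⟨a, b, c, d, ?_⟩
  ext i j
  fin_cases i <;> fin_cases j <;> simp [single]

theorem lie_lie_lie_even_odd (p q a₁ b₁ c₁ d₁ a₂ b₂ c₂ d₂ a₃ b₃ c₃ d₃ : R) :
    ⁅⁅⁅!![p, q, 0; 0, 0, -q; 0, 0, -p], !![a₁, c₁, d₁; 0, b₁, c₁; 0, 0, a₁]⁆,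
        !![a₂, c₂, d₂; 0, b₂, c₂; 0, 0, a₂]⁆, !![a₃, c₃, d₃; 0, b₃, c₃; 0, 0, a₃]⁆ =
      ((p * c₁ + q * (b₁ - a₁)) * (b₂ - a₂) * (b₃ - a₃)) • (single 0 1 1 + single 1 2 1) +
      ((p * c₁ + q * (b₁ - a₁)) * (b₂ - a₂) * (2 * c₃)) • single 0 2 1 := by
  simp only [Ring.lie_def]
  ext i j
  fin_cases i <;> fin_cases j <;> simp [single] <;> ring

end UT3

open UT3 in
theorem ut3_trivial_T2_alternating_identity_general
    {F : Type*} [Field F]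
    (lie : Matrix (Fin 3) (Fin 3) F → Matrix (Fin 3) (Fin 3) F → Matrix (Fin 3) (Fin 3) F)
    (hlie : ∀ x y, lie x y = x * y - y * x)
    (y : Matrix (Fin 3) (Fin 3) F)
    (hy : y ∈ Submodule.span F ({Matrix.single 0 0 (1 : F) - Matrix.single 2 2 (1 : F),
      Matrix.single 0 1 (1 : F) - Matrix.single 1 2 (1 : F)} : Set (Matrix (Fin 3) (Fin 3) F)))
    (z : Fin 3 → Matrix (Fin 3) (Fin 3) F)
    (hz : ∀ i, z i ∈ Submodule.span F ({Matrix.single 0 0 (1 : F) + Matrix.single 2 2 (1 : F),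
      Matrix.single 1 1 (1 : F), Matrix.single 0 1 (1 : F) + Matrix.single 1 2 (1 : F),
      Matrix.single 0 2 (1 : F)} : Set (Matrix (Fin 3) (Fin 3) F))) :
    ∑ σ : Equiv.Perm (Fin 3),
      (Equiv.Perm.sign σ : ℤ) • lie (lie (lie y (z (σ 0))) (z (σ 1))) (z (σ 2)) = 0 := by
  obtain ⟨p, q, rfl⟩ := exists_eq_of_mem_evenPart hy
  choose a b c d hz using fun i => exists_eq_of_mem_oddPart (hz i)
  set g : Fin 3 → F := fun i => b i - a i
  set f : Fin 3 → F := fun i => p * c i + q * g i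
  simp only [hlie, ← Ring.lie_def, hz, lie_lie_lie_even_odd, smul_add (M := ℤ),
    Finset.sum_add_distrib]
  rw [sum_perm_sign_smul_mul_smul_eq_det_smul f g g,
    sum_perm_sign_smul_mul_smul_eq_det_smul f g (fun i => 2 * c i)]
  have h₁ : (of ![f, g, g]).det = 0 := det_zero_of_row_eq (i := 1) (j := 2) (by decide) rfl
  have h₂ : (of ![f, g, fun i => 2 * c i]).det = 0 := by
    refine det_eq_zero_of_forall_row_eq_smul_add_smul c g _ fun i => ?_
    fin_cases i
    exacts [⟨p, q, by ext; simp [f]⟩, ⟨0, 1, by ext; simp⟩, ⟨2, 0, by ext; simp⟩]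
  rw [h₁, h₂, zero_smul, zero_smul, add_zero]

theorem ut3_trivial_T2_alternating_identity
    {F : Type*} [Field F] [CharZero F]
    (lie : Matrix (Fin 3) (Fin 3) F → Matrix (Fin 3) (Fin 3) F → Matrix (Fin 3) (Fin 3) F)
    (hlie : ∀ x y, lie x y = x * y - y * x)
    (y : Matrix (Fin 3) (Fin 3) F)
    (hy : y ∈ Submodule.span F ({Matrix.single 0 0 (1 : F) - Matrix.single 2 2 (1 : F),
      Matrix.single 0 1 (1 : F) - Matrix.single 1 2 (1 : F)} : Set (Matrix (Fin 3) (Fin 3) F)))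
    (z : Fin 3 → Matrix (Fin 3) (Fin 3) F)
    (hz : ∀ i, z i ∈ Submodule.span F ({Matrix.single 0 0 (1 : F) + Matrix.single 2 2 (1 : F),
      Matrix.single 1 1 (1 : F), Matrix.single 0 1 (1 : F) + Matrix.single 1 2 (1 : F),
      Matrix.single 0 2 (1 : F)} : Set (Matrix (Fin 3) (Fin 3) F))) :
    ∑ σ : Equiv.Perm (Fin 3),
      (Equiv.Perm.sign σ : ℤ) • lie (lie (lie y (z (σ 0))) (z (σ 1))) (z (σ 2)) = 0 :=
  ut3_trivial_T2_alternating_identity_general lie hlie y hy z hz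
end

section
/- In UT₃ with the Trivial T2 ℤ₂-grading, for all y₁, y₂ ∈ A₀ and z₁, z₂ ∈ A_t: [[y₁,y₂],[y₃,y₄]] = 0 for any y₃,y₄ ∈ A₀, [[z₁,z₂],[z₃,z₄]] = 0 for any z₃,z₄ ∈ A_t, and [[y₁,z₁],[y₂,z₂]] = 0. -/
open Matrix

/-!
The commutator of two elements of `A₀`, or of two elements of `A_t`, is a multiple of
`v = e₁₂ - e₂₃`, and the commutator of an element of `A₀` with one of `A_t` lies in
`Span{e₁₂ + e₂₃, e₁₃}`. Both target subspaces are commutative (`e₁₂ + e₂₃` and `e₁₃` have zero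
products in either order), so the outer commutators vanish.
-/

namespace Submodule

variable {R M : Type*} [Semiring R] [AddCommMonoid M] [Module R M]

theorem mem_span_quadruple {v w x y z : M} :
    v ∈ span R ({w, x, y, z} : Set M) ↔ ∃ a b c d : R, a • w + b • x + c • y + d • z = v := by
  rw [mem_span_insert]
  simp_rw [mem_span_triple]
  refine exists_congr fun a ↦ ⟨?_, ?_⟩
  · rintro ⟨u, ⟨b, c, d, rfl⟩, rfl⟩
    exact ⟨b, c, d, by abel⟩
  · rintro ⟨b, c, d, rfl⟩
    exact ⟨_, ⟨b, c, d, rfl⟩, by abel⟩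

end Submodule

theorem mul_sub_mul_eq_zero_of_mem_span {R A : Type*} [Semiring R] [NonUnitalNonAssocRing A]
    [Module R A] [IsScalarTower R A A] [SMulCommClass R A A] {s : Set A}
    (hs : ∀ a ∈ s, ∀ b ∈ s, Commute a b) {x y : A}
    (hx : x ∈ Submodule.span R s) (hy : y ∈ Submodule.span R s) : x * y - y * x = 0 :=
  sub_eq_zero_of_eq (Commute.span_left (fun a ha ↦ Commute.span_right (hs a ha) y hy) x hx).eq

namespace UT3

open Submodule

variable {F : Type*} [CommRing F]

/- The bases `u, v` of `A₀` and `w₁, …, w₄` of `A_t`; indices are `0`-based, so `single 0 1 1`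
is `e₁₂`. -/
def u : Matrix (Fin 3) (Fin 3) F := single 0 0 1 - single 2 2 1
def v : Matrix (Fin 3) (Fin 3) F := single 0 1 1 - single 1 2 1
def w₁ : Matrix (Fin 3) (Fin 3) F := single 0 0 1 + single 2 2 1
def w₂ : Matrix (Fin 3) (Fin 3) F := single 1 1 1
def w₃ : Matrix (Fin 3) (Fin 3) F := single 0 1 1 + single 1 2 1
def w₄ : Matrix (Fin 3) (Fin 3) F := single 0 2 1

theorem commutator_lincomb_u_v (a b c d : F) :
    (a • u + b • v) * (c • u + d • v) - (c • u + d • v) * (a • u + b • v)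
      = (a * d - b * c) • (v : Matrix (Fin 3) (Fin 3) F) := by
  simp only [u, v, add_mul, mul_add, sub_mul, mul_sub, smul_mul_smul_comm, single_mul_single_same,
    single_mul_single_of_ne, ne_eq, Fin.reduceEq, not_false_eq_true, mul_one]
  module

theorem commutator_lincomb_w (a₁ a₂ a₃ a₄ b₁ b₂ b₃ b₄ : F) :
    (a₁ • w₁ + a₂ • w₂ + a₃ • w₃ + a₄ • w₄) * (b₁ • w₁ + b₂ • w₂ + b₃ • w₃ + b₄ • w₄)
      - (b₁ • w₁ + b₂ • w₂ + b₃ • w₃ + b₄ • w₄) * (a₁ • w₁ + a₂ • w₂ + a₃ • w₃ + a₄ • w₄)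
      = ((a₁ - a₂) * b₃ - a₃ * (b₁ - b₂)) • (v : Matrix (Fin 3) (Fin 3) F) := by
  simp only [v, w₁, w₂, w₃, w₄, add_mul, mul_add, smul_mul_smul_comm, single_mul_single_same,
    single_mul_single_of_ne, ne_eq, Fin.reduceEq, not_false_eq_true, mul_one]
  module

theorem commutator_lincomb_u_v_lincomb_w (a b p q r s : F) :
    (a • u + b • v) * (p • w₁ + q • w₂ + r • w₃ + s • w₄)
      - (p • w₁ + q • w₂ + r • w₃ + s • w₄) * (a • u + b • v)
      = (a * r - b * (p - q)) • w₃ + (2 * (a * s + b * r)) • (w₄ : Matrix (Fin 3) (Fin 3) F) := by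
  simp only [u, v, w₁, w₂, w₃, w₄, add_mul, mul_add, sub_mul, mul_sub, smul_mul_smul_comm,
    single_mul_single_same, single_mul_single_of_ne, ne_eq, Fin.reduceEq, not_false_eq_true,
    mul_one]
  module

theorem commute_w₃_w₄ : Commute (w₃ : Matrix (Fin 3) (Fin 3) F) w₄ := by
  simp only [Commute, SemiconjBy, w₃, w₄, add_mul, mul_add, single_mul_single_of_ne, ne_eq,
    Fin.reduceEq, not_false_eq_true]

variable {x y : Matrix (Fin 3) (Fin 3) F}

theorem commutator_mem_span_v_of_mem_span_u_v (hx : x ∈ span F {u, v}) (hy : y ∈ span F {u, v}) :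
    x * y - y * x ∈ span F {v} := by
  obtain ⟨a, b, rfl⟩ := mem_span_pair.1 hx
  obtain ⟨c, d, rfl⟩ := mem_span_pair.1 hy
  rw [commutator_lincomb_u_v]
  exact smul_mem _ _ (mem_span_singleton_self v)

theorem commutator_mem_span_v_of_mem_span_w (hx : x ∈ span F {w₁, w₂, w₃, w₄})
    (hy : y ∈ span F {w₁, w₂, w₃, w₄}) : x * y - y * x ∈ span F {v} := by
  obtain ⟨a₁, a₂, a₃, a₄, rfl⟩ := mem_span_quadruple.1 hx
  obtain ⟨b₁, b₂, b₃, b₄, rfl⟩ := mem_span_quadruple.1 hy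
  rw [commutator_lincomb_w]
  exact smul_mem _ _ (mem_span_singleton_self v)

theorem commutator_mem_span_w₃_w₄ (hx : x ∈ span F {u, v}) (hy : y ∈ span F {w₁, w₂, w₃, w₄}) :
    x * y - y * x ∈ span F {w₃, w₄} := by
  obtain ⟨a, b, rfl⟩ := mem_span_pair.1 hx
  obtain ⟨p, q, r, s, rfl⟩ := mem_span_quadruple.1 hy
  rw [commutator_lincomb_u_v_lincomb_w]
  exact mem_span_pair.2 ⟨_, _, rfl⟩

end UT3

open UT3 in
theorem ut3_trivial_T2_product_identities
    {F : Type*} [Field F]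
    (lie : Matrix (Fin 3) (Fin 3) F → Matrix (Fin 3) (Fin 3) F → Matrix (Fin 3) (Fin 3) F)
    (hlie : ∀ x y, lie x y = x * y - y * x)
    (A₀ : Submodule F (Matrix (Fin 3) (Fin 3) F))
    (At : Submodule F (Matrix (Fin 3) (Fin 3) F))
    (hA₀ : A₀ = Submodule.span F ({Matrix.single 0 0 (1 : F) - Matrix.single 2 2 (1 : F),
      Matrix.single 0 1 (1 : F) - Matrix.single 1 2 (1 : F)} : Set (Matrix (Fin 3) (Fin 3) F)))
    (hAt : At = Submodule.span F ({Matrix.single 0 0 (1 : F) + Matrix.single 2 2 (1 : F),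
      Matrix.single 1 1 (1 : F), Matrix.single 0 1 (1 : F) + Matrix.single 1 2 (1 : F),
      Matrix.single 0 2 (1 : F)} : Set (Matrix (Fin 3) (Fin 3) F))) :
    (∀ y₁ ∈ A₀, ∀ y₂ ∈ A₀, ∀ y₃ ∈ A₀, ∀ y₄ ∈ A₀, lie (lie y₁ y₂) (lie y₃ y₄) = 0) ∧
    (∀ z₁ ∈ At, ∀ z₂ ∈ At, ∀ z₃ ∈ At, ∀ z₄ ∈ At, lie (lie z₁ z₂) (lie z₃ z₄) = 0) ∧
    (∀ y₁ ∈ A₀, ∀ z₁ ∈ At, ∀ y₂ ∈ A₀, ∀ z₂ ∈ At, lie (lie y₁ z₁) (lie y₂ z₂) = 0) := by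
  have v_commute : ∀ a ∈ ({v} : Set (Matrix (Fin 3) (Fin 3) F)), ∀ b ∈ ({v} : Set _),
      Commute a b := by
    rintro a rfl b rfl
    rfl
  have w₃_w₄_commute : ∀ a ∈ ({w₃, w₄} : Set (Matrix (Fin 3) (Fin 3) F)),
      ∀ b ∈ ({w₃, w₄} : Set _), Commute a b := by
    rintro a (rfl | rfl) b (rfl | rfl)
    exacts [.refl _, commute_w₃_w₄, commute_w₃_w₄.symm, .refl _]
  subst hA₀ hAt
  simp only [hlie]
  refine ⟨fun y₁ h₁ y₂ h₂ y₃ h₃ y₄ h₄ ↦ ?_, fun z₁ h₁ z₂ h₂ z₃ h₃ z₄ h₄ ↦ ?_,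
    fun y₁ h₁ z₁ h₁' y₂ h₂ z₂ h₂' ↦ ?_⟩
  · exact mul_sub_mul_eq_zero_of_mem_span v_commute
      (commutator_mem_span_v_of_mem_span_u_v h₁ h₂) (commutator_mem_span_v_of_mem_span_u_v h₃ h₄)
  · exact mul_sub_mul_eq_zero_of_mem_span v_commute
      (commutator_mem_span_v_of_mem_span_w h₁ h₂) (commutator_mem_span_v_of_mem_span_w h₃ h₄)
  · exact mul_sub_mul_eq_zero_of_mem_span w₃_w₄_commute
      (commutator_mem_span_w₃_w₄ h₁ h₁') (commutator_mem_span_w₃_w₄ h₂ h₂')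
end

section
/- In UT₅ graded elementarily by η = (g, g, h, h) with g, h distinct nontrivial group elements, the element [[a,b],[c,d]] vanishes for all a, c of degree g and b, d of degree h, even though the single long commutator vanishing identities alone would not force this; concretely, for a, c ∈ Span{e₁₂, e₂₃} and b, d ∈ Span{e₃₄, e₄₅}, [[a,b],[c,d]] = 0 in UT₅. -/
/-!
An element of `span {e₁₂, e₂₃}` times an element of `span {e₃₄, e₄₅}` can only produce `e₂₃ e₃₄ = e₂₄`,
and every product in the other order vanishes, so both `[a, b]` and `[c, d]` are multiples of `e₂₄`;
two multiples of the same matrix commute. (Indices are 1-based here: `eᵢⱼ` is `single (i-1) (j-1) 1`.)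
-/

open Matrix

theorem Commute.of_mem_span_singleton {R A : Type*} [CommSemiring R] [Semiring A] [Algebra R A]
    {v x y : A} (hx : x ∈ R ∙ v) (hy : y ∈ R ∙ v) : Commute x y := by
  obtain ⟨r, rfl⟩ := Submodule.mem_span_singleton.mp hx
  obtain ⟨s, rfl⟩ := Submodule.mem_span_singleton.mp hy
  exact ((Commute.refl v).smul_left r).smul_right s

theorem Matrix.commutator_mem_span_single_of_mem_span_pair {n R : Type*} [DecidableEq n]
    [Fintype n] [CommRing R] {i j k l m : n}
    (hjk : j ≠ k) (hjl : j ≠ l) (hkl : k ≠ l) (hli : l ≠ i) (hmi : m ≠ i) (hmj : m ≠ j)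
    {x y : Matrix n n R}
    (hx : x ∈ Submodule.span R {single i j (1 : R), single j k 1})
    (hy : y ∈ Submodule.span R {single k l (1 : R), single l m 1}) :
    x * y - y * x ∈ R ∙ single j l (1 : R) := by
  obtain ⟨α, β, rfl⟩ := Submodule.mem_span_pair.mp hx
  obtain ⟨γ, δ, rfl⟩ := Submodule.mem_span_pair.mp hy
  refine Submodule.mem_span_singleton.mpr ⟨β * γ, ?_⟩
  simp only [add_mul, mul_add, smul_mul_smul_comm, single_mul_single_same, mul_one,
    single_mul_single_of_ne, hjk, hjl, hjl.symm, hkl, hli, hmi, hmj, ne_eq, not_false_eq_true,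
    smul_zero, add_zero, zero_add, sub_zero]

theorem ut5_gghh_grading_identity
    {F : Type*} [Field F]
    (lie : Matrix (Fin 5) (Fin 5) F → Matrix (Fin 5) (Fin 5) F → Matrix (Fin 5) (Fin 5) F)
    (hlie : ∀ x y, lie x y = x * y - y * x)
    (a c : Matrix (Fin 5) (Fin 5) F)
    (ha : a ∈ Submodule.span F ({single 0 1 (1 : F), single 1 2 (1 : F)} :
      Set (Matrix (Fin 5) (Fin 5) F)))
    (hc : c ∈ Submodule.span F ({single 0 1 (1 : F), single 1 2 (1 : F)} :
      Set (Matrix (Fin 5) (Fin 5) F)))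
    (b d : Matrix (Fin 5) (Fin 5) F)
    (hb : b ∈ Submodule.span F ({single 2 3 (1 : F), single 3 4 (1 : F)} :
      Set (Matrix (Fin 5) (Fin 5) F)))
    (hd : d ∈ Submodule.span F ({single 2 3 (1 : F), single 3 4 (1 : F)} :
      Set (Matrix (Fin 5) (Fin 5) F))) :
    lie (lie a b) (lie c d) = 0 := by
  have hab := commutator_mem_span_single_of_mem_span_pair
    (by decide) (by decide) (by decide) (by decide) (by decide) (by decide) ha hb
  have hcd := commutator_mem_span_single_of_mem_span_pair
    (by decide) (by decide) (by decide) (by decide) (by decide) (by decide) hc hd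
  rw [hlie, hlie a, hlie c]
  exact sub_eq_zero.mpr (Commute.of_mem_span_singleton hab hcd).eq
end
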